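/- arXiv:2210.02711 — 5 statements merged into one kernel-verified Lean document; each statement's English description precedes it below -/
import Mathlib

section
/- For every natural number n, the graph G contains n pairwise vertex-disjoint H-minors. -/
/-!
Model `k < n` of `H`: the arch `A_k` runs from `(-(k+1), 0)` up to row `k`, across, and down to
`(k, 0)`. Taking `A_k` as the branch set of the vertex shared by `K₅` and `K₃,₃` in `I`, and the
other vertices of the `K₅` attached at `-(k+1)` and of the `K₃,₃` attached at `k` as singleton
branch sets, gives a model of `I`; column `n + k` is a ray. Distinct models are disjoint: `A_k`
lies on the level set `max(h, c, -c-1) = k` of the half-grid left of column `n`, and the rays lie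
in distinct columns right of it.
-/

open SimpleGraph

/-- A model (inflated copy) of `X` in `G`: pairwise disjoint nonempty connected branch
sets `B v`, one for each vertex `v` of `X`, such that for every edge `v w` of `X` there is
an edge of `G` between `B v` and `B w`. -/
structure IsMinorModel {α β : Type*} (X : SimpleGraph α) (G : SimpleGraph β)
    (B : α → Set β) : Prop where
  nonempty : ∀ v, (B v).Nonempty
  connected : ∀ v, (G.induce (B v)).Connected
  pairwise_disjoint : ∀ ⦃v w⦄, v ≠ w → Disjoint (B v) (B w)
  adj : ∀ ⦃v w⦄, X.Adj v w → ∃ x ∈ B v, ∃ y ∈ B w, G.Adj x y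

/-- An `ι`-indexed family of pairwise vertex-disjoint models of `X` in `G`. -/
def DisjointModels {α β ι : Type*} (X : SimpleGraph α) (G : SimpleGraph β)
    (B : ι → α → Set β) : Prop :=
  (∀ k, IsMinorModel X G (B k)) ∧
    ∀ ⦃k l⦄, k ≠ l → Disjoint (⋃ v, B k v) (⋃ v, B l v)

/-- `X` is ubiquitous (w.r.t. the minor relation): every graph containing `n` pairwise
vertex-disjoint `X`-minors for every `n` contains infinitely many pairwise
vertex-disjoint `X`-minors. -/
def Ubiquitous {α : Type*} (X : SimpleGraph α) : Prop :=
  ∀ ⦃β : Type⦄ (G : SimpleGraph β),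
    (∀ n : ℕ, ∃ B : Fin n → α → Set β, DisjointModels X G B) →
    ∃ B : ℕ → α → Set β, DisjointModels X G B

/-- The ray: the one-way infinite path on `ℕ`. -/
def Ray : SimpleGraph ℕ := SimpleGraph.fromRel (fun n m => m = n + 1)

/-- The complete graph `K₅`. -/
abbrev K5 : SimpleGraph (Fin 5) := ⊤

/-- The complete bipartite graph `K₃,₃`. -/
abbrev K33 : SimpleGraph (Fin 3 ⊕ Fin 3) := completeBipartiteGraph (Fin 3) (Fin 3)

/-- Vertices of the 1-sum `I` of `K₅` and `K₃,₃`: the five vertices of `K₅` (with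
`Sum.inl 0` the identified vertex, which is also a vertex of the left side of `K₃,₃`),
plus the two remaining left-side vertices and the three right-side vertices of `K₃,₃`. -/
abbrev IV : Type := Fin 5 ⊕ (Fin 2 ⊕ Fin 3)

def IRel : IV → IV → Prop
  | Sum.inl _, Sum.inl _ => True
  | Sum.inl i, Sum.inr (Sum.inr _) => i = 0
  | Sum.inr (Sum.inl _), Sum.inr (Sum.inr _) => True
  | _, _ => False

/-- The graph `I`: the 1-sum of `K₅` and `K₃,₃`, identifying one vertex of each. -/
def GraphI : SimpleGraph IV := SimpleGraph.fromRel IRel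

/-- The graph `H`: the disjoint union of `I` and a ray. -/
def GraphH : SimpleGraph (IV ⊕ ℕ) := GraphI ⊕g Ray

def GridRel (p q : ℤ × ℕ) : Prop :=
  (q.1 = p.1 + 1 ∧ q.2 = p.2) ∨ (q.1 = p.1 ∧ q.2 = p.2 + 1)

/-- The half-grid on `ℤ × ℕ`: vertices adjacent iff they differ by exactly `1` in one
coordinate and agree in the other. -/
def HalfGrid : SimpleGraph (ℤ × ℕ) := SimpleGraph.fromRel GridRel

abbrev NegInt : Type := {a : ℤ // a < 0}
abbrev NonnegInt : Type := {b : ℤ // 0 ≤ b}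

/-- Vertices of `G`: the half-grid vertices, plus for each `a < 0` four new vertices
(completing the `K₅` attached at `(a,0)`), plus for each `b ≥ 0` five new vertices
(completing the `K₃,₃` attached at `(b,0)`; the new vertices `0, 1` together with
`(b,0)` form the left side and the new vertices `2, 3, 4` form the right side). -/
abbrev GV : Type := (ℤ × ℕ) ⊕ ((NegInt × Fin 4) ⊕ (NonnegInt × Fin 5))

def GRel : GV → GV → Prop
  | Sum.inl p, Sum.inl q => GridRel p q
  | Sum.inl p, Sum.inr (Sum.inl w) => p = (w.1.1, 0)
  | Sum.inl p, Sum.inr (Sum.inr w) => p = (w.1.1, 0) ∧ 2 ≤ (w.2 : ℕ)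
  | Sum.inr (Sum.inl w), Sum.inr (Sum.inl w') => w.1 = w'.1
  | Sum.inr (Sum.inr w), Sum.inr (Sum.inr w') => w.1 = w'.1 ∧ (w.2 : ℕ) < 2 ∧ 2 ≤ (w'.2 : ℕ)
  | _, _ => False

/-- The graph `G`: the half-grid with a `K₅` attached at each `(a,0)`, `a < 0`, and a
`K₃,₃` attached at each `(b,0)`, `b ≥ 0`. -/
def GraphG : SimpleGraph GV := SimpleGraph.fromRel GRel

/-- The vertex set of the attached copy of `K₅` at `(a, 0)`. -/
def K5copy (a : NegInt) : Set GV :=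
  {Sum.inl (a.1, 0)} ∪ {x | ∃ i : Fin 4, x = Sum.inr (Sum.inl (a, i))}

/-- The vertex set of the attached copy of `K₃,₃` at `(b, 0)`. -/
def K33copy (b : NonnegInt) : Set GV :=
  {Sum.inl (b.1, 0)} ∪ {x | ∃ i : Fin 5, x = Sum.inr (Sum.inr (b, i))}

namespace SimpleGraph

variable {V : Type*} (G : SimpleGraph V)

lemma connected_induce_singleton (v : V) : (G.induce {v}).Connected := by
  rw [induce_singleton_eq_top]
  exact connected_top

lemma connected_induce_image_Iic {g : ℕ → V} {N : ℕ}
    (hg : ∀ j < N, G.Adj (g j) (g (j + 1))) : (G.induce (g '' Set.Iic N)).Connected := by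
  induction N with
  | zero =>
    have : g '' Set.Iic 0 = {g 0} := by ext; simp [eq_comm]
    rw [this]
    exact G.connected_induce_singleton (g 0)
  | succ N ih =>
    have hIic : g '' Set.Iic (N + 1) = g '' Set.Iic N ∪ {g (N + 1)} := by
      rw [← Order.succ_eq_add_one, Order.Iic_succ, Set.image_insert_eq, Set.insert_eq,
        Set.union_comm]
    rw [hIic]
    exact G.connected_induce_union (ih fun j hj => hg j (by omega)).preconnected
      (G.connected_induce_singleton _).preconnected ⟨N, Set.mem_Iic.2 le_rfl, rfl⟩ rfl
      (hg N N.lt_succ_self)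

end SimpleGraph

section StarModel

variable {α β : Type*} {X : SimpleGraph α} {G : SimpleGraph β}

theorem isMinorModel_update_singleton [DecidableEq α] {f : α → β} (hf : Function.Injective f)
    {v₀ : α} {S : Set β} (hS : (G.induce S).Connected) (hv₀ : f v₀ ∈ S)
    (hfS : ∀ v ≠ v₀, f v ∉ S)
    (hadj : ∀ v w, X.Adj v w → v ≠ v₀ → w ≠ v₀ → G.Adj (f v) (f w))
    (hadj₀ : ∀ w, X.Adj v₀ w → ∃ x ∈ S, G.Adj x (f w)) :
    IsMinorModel X G (Function.update (fun v => ({f v} : Set β)) v₀ S) := by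
  have hsing : ∀ v ≠ v₀, Function.update (fun v => ({f v} : Set β)) v₀ S v = {f v} :=
    fun v hv => Function.update_of_ne hv _ _
  constructor
  · intro v
    rcases eq_or_ne v v₀ with rfl | hv
    · exact ⟨f v, by simpa using hv₀⟩
    · simp [hsing v hv]
  · intro v
    rcases eq_or_ne v v₀ with rfl | hv
    · rw [Function.update_self]
      exact hS
    · rw [hsing v hv]
      exact G.connected_induce_singleton (f v)
  · intro v w hvw
    rcases eq_or_ne v v₀ with rfl | hv
    · simpa [hsing w hvw.symm] using hfS w hvw.symm
    rcases eq_or_ne w v₀ with rfl | hw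
    · simpa [hsing v hv] using hfS v hv
    simpa [hsing v hv, hsing w hw] using hf.ne hvw
  · intro v w h
    rcases eq_or_ne v v₀ with rfl | hv
    · obtain ⟨x, hx, hxw⟩ := hadj₀ w h
      exact ⟨x, by simpa using hx, f w, by simp [hsing w h.ne.symm], hxw⟩
    rcases eq_or_ne w v₀ with rfl | hw
    · obtain ⟨x, hx, hxv⟩ := hadj₀ v h.symm
      exact ⟨f v, by simp [hsing v hv], x, by simpa using hx, hxv.symm⟩
    exact ⟨f v, by simp [hsing v hv], f w, by simp [hsing w hw], hadj v w h hv hw⟩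

end StarModel

def archPoint (k j : ℕ) : ℤ × ℕ :=
  if j ≤ k then (-((k : ℤ) + 1), j)
  else if j ≤ 3 * k + 1 then ((j : ℤ) - 2 * k - 1, k)
  else (k, 4 * k + 1 - j)

def Arch (k : ℕ) : Set GV := (fun j => Sum.inl (archPoint k j)) '' Set.Iic (4 * k + 1)

def archLevel (p : ℤ × ℕ) : ℤ := max (p.2 : ℤ) (max p.1 (-p.1 - 1))

lemma archPoint_zero (k : ℕ) : archPoint k 0 = (-((k : ℤ) + 1), 0) := by
  simp [archPoint]

lemma archPoint_last (k : ℕ) : archPoint k (4 * k + 1) = ((k : ℤ), 0) := by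
  simp only [archPoint]
  split_ifs <;> ext <;> simp <;> omega

lemma archPoint_fst_le_and_archLevel {k j : ℕ} (hj : j ≤ 4 * k + 1) :
    (archPoint k j).1 ≤ k ∧ archLevel (archPoint k j) = k := by
  simp only [archPoint, archLevel]
  split_ifs <;> simp <;> omega

lemma graphG_adj_archPoint_succ {k j : ℕ} (hj : j < 4 * k + 1) :
    GraphG.Adj (Sum.inl (archPoint k j)) (Sum.inl (archPoint k (j + 1))) := by
  simp only [GraphG, fromRel_adj, GRel, GridRel, archPoint]
  split_ifs <;> simp <;> omega

lemma connected_induce_arch (k : ℕ) : (GraphG.induce (Arch k)).Connected :=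
  GraphG.connected_induce_image_Iic fun _ => graphG_adj_archPoint_succ

def k5Site (k : ℕ) : NegInt := ⟨-((k : ℤ) + 1), by omega⟩

def k33Site (k : ℕ) : NonnegInt := ⟨k, by omega⟩

def modelVertex (k : ℕ) (r : ℤ) : IV ⊕ ℕ → GV :=
  Sum.elim
    (Sum.elim (Fin.cons (Sum.inl (-((k : ℤ) + 1), 0)) fun i => Sum.inr (Sum.inl (k5Site k, i)))
      (Sum.elim (fun s => Sum.inr (Sum.inr (k33Site k, Fin.castLE (by omega) s)))
        fun t => Sum.inr (Sum.inr (k33Site k, ⟨t + 2, by omega⟩))))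
    fun m => Sum.inl (r, m)

def model (k : ℕ) (r : ℤ) : IV ⊕ ℕ → Set GV :=
  Function.update (fun v => {modelVertex k r v}) (Sum.inl (Sum.inl 0)) (Arch k)

section ModelOfH

variable {k : ℕ} {r : ℤ}

lemma modelVertex_injective (hk : k < r) :
    Function.Injective (modelVertex k r) := by
  rintro ((i | s | t) | m) ((j | s' | t') | m') h
  all_goals (try cases i using Fin.cases) <;> (try cases j using Fin.cases)
  all_goals simp_all [modelVertex, Fin.ext_iff]
  all_goals omega

lemma modelVertex_not_mem_arch (hk : k < r) {v : IV ⊕ ℕ}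
    (hv : v ≠ Sum.inl (Sum.inl 0)) : modelVertex k r v ∉ Arch k := by
  rintro ⟨j, hj, hjv⟩
  have := archPoint_fst_le_and_archLevel (Set.mem_Iic.1 hj)
  rcases v with ((i | s | t) | m)
  all_goals (try cases i using Fin.cases)
  all_goals simp_all [modelVertex]
  omega

lemma modelVertex_adj :
    ∀ v w, GraphH.Adj v w → v ≠ Sum.inl (Sum.inl 0) → w ≠ Sum.inl (Sum.inl 0) →
      GraphG.Adj (modelVertex k r v) (modelVertex k r w) := by
  rintro ((i | s | t) | m) ((j | s' | t') | m') h hv hw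
  all_goals (try cases i using Fin.cases) <;> (try cases j using Fin.cases)
  all_goals simp [GraphH, GraphI, IRel, Ray, modelVertex, GraphG, GRel, GridRel] at h hv hw ⊢
  all_goals first | assumption | simp only [Fin.ext_iff, Fin.val_castLE]; omega

lemma exists_arch_adj_modelVertex :
    ∀ w, GraphH.Adj (Sum.inl (Sum.inl 0)) w →
      ∃ x ∈ Arch k, GraphG.Adj x (modelVertex k r w) := by
  rintro ((j | s | t) | m) h
  all_goals (try cases j using Fin.cases)
  all_goals simp [GraphH, GraphI, IRel] at h
  · exact ⟨_, ⟨0, by simp, rfl⟩, by simp [archPoint_zero, modelVertex, GraphG, GRel, k5Site]⟩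
  · exact ⟨_, ⟨4 * k + 1, by simp, rfl⟩,
      by simp [archPoint_last, modelVertex, GraphG, GRel, k33Site]⟩

theorem isMinorModel_model (hk : k < r) :
    IsMinorModel GraphH GraphG (model k r) :=
  isMinorModel_update_singleton (modelVertex_injective hk) (connected_induce_arch k)
    ⟨0, by simp, by simp [modelVertex, archPoint_zero]⟩ (fun _ => modelVertex_not_mem_arch hk)
    modelVertex_adj exists_arch_adj_modelVertex

end ModelOfH

def modelLevel (n : ℕ) : GV → ℤ
  | Sum.inl p => if (n : ℤ) ≤ p.1 then p.1 - n else archLevel p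
  | Sum.inr (Sum.inl (a, _)) => -a.1 - 1
  | Sum.inr (Sum.inr (b, _)) => b.1

lemma modelLevel_of_mem_model {n k : ℕ} (hk : k < n) {v : IV ⊕ ℕ} {x : GV}
    (hx : x ∈ model k (n + k) v) : modelLevel n x = k := by
  rcases eq_or_ne v (Sum.inl (Sum.inl 0)) with rfl | hv
  · obtain ⟨j, hj, rfl⟩ : x ∈ Arch k := by simpa [model] using hx
    obtain ⟨hcol, hlevel⟩ := archPoint_fst_le_and_archLevel (Set.mem_Iic.1 hj)
    rw [modelLevel, if_neg (by omega), hlevel]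
  · rw [model, Function.update_of_ne hv, Set.mem_singleton_iff] at hx
    subst hx
    rcases v with ((i | s | t) | m)
    all_goals (try cases i using Fin.cases)
    all_goals simp [modelVertex, modelLevel, archLevel, k5Site, k33Site]
    omega

/-- For every natural number `n`, the graph `G` contains `n` pairwise
vertex-disjoint `H`-minors. -/
theorem statement1 :
    ∀ n : ℕ, ∃ B : Fin n → (IV ⊕ ℕ) → Set GV, DisjointModels GraphH GraphG B := by
  intro n
  refine ⟨fun k => model k (n + k), fun k => isMinorModel_model (by omega), ?_⟩
  intro k l hkl
  rw [Set.disjoint_left]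
  simp only [Set.mem_iUnion]
  rintro x ⟨v, hv⟩ ⟨w, hw⟩
  have := (modelLevel_of_mem_model k.isLt hv).symm.trans (modelLevel_of_mem_model l.isLt hw)
  exact hkl (Fin.ext (by exact_mod_cast this))
end

section
/- The graph G contains infinitely many pairwise vertex-disjoint I-minors. -/
open SimpleGraph

/-!
Model `k` uses the `K₅` attached at `(-(k+1), 0)` and the `K₃,₃` attached at `(k, 0)`. The
vertex of `I` shared by `K₅` and `K₃,₃` is inflated to the U-shaped grid path that climbs from
`(-(k+1), 0)` to height `k`, runs across to `(k, k)` and descends to `(k, 0)`. These paths are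
level sets of `(x, y) ↦ max (-x-1, x, y)`; giving each attached vertex the level of its attachment
point puts all of model `k` at level `k`, so distinct models are disjoint.
-/

lemma induce_image_Iic_connected {β : Type*} {G : SimpleGraph β} (f : ℕ → β) :
    ∀ n, (∀ i < n, G.Adj (f i) (f (i + 1))) → (G.induce (f '' Set.Iic n)).Connected
  | 0, _ => by
    rw [show Set.Iic 0 = {0} from Set.Iic_bot, Set.image_singleton, induce_singleton_eq_top]
    exact connected_top
  | n + 1, h => by
    have hs : f '' Set.Iic (n + 1) = f '' Set.Iic n ∪ {f (n + 1)} := by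
      rw [← Order.succ_eq_add_one, Order.Iic_succ, Set.image_insert_eq, Set.union_comm,
        Set.insert_eq]
    rw [hs]
    exact connected_induce_union
      (induce_image_Iic_connected f n fun i hi => h i (by omega)).preconnected
      (by simp) ⟨n, Set.mem_Iic.2 le_rfl, rfl⟩ rfl (h n n.lt_succ_self)

def attachedK5 (a : NegInt) : K5 →g GraphG where
  toFun := Fin.cases (.inl (a.1, 0)) fun i => .inr (.inl (a, i))
  map_rel' {i j} hij := by
    rw [GraphG, fromRel_adj]
    cases i using Fin.cases <;> cases j using Fin.cases <;>
      simp_all [GRel, Fin.succ_inj]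

def attachedK33 (b : NonnegInt) : K33 →g GraphG where
  toFun
    | .inl j => Fin.cases (.inl (b.1, 0)) (fun j => .inr (.inr (b, Fin.castLE (by omega) j))) j
    | .inr j => .inr (.inr (b, Fin.natAdd 2 j))
  map_rel' {u v} huv := by
    rw [GraphG, fromRel_adj]
    rcases u with j | j <;> rcases v with j' | j' <;>
      simp only [completeBipartiteGraph_adj, Sum.isLeft_inl, Sum.isLeft_inr, Sum.isRight_inl,
        Sum.isRight_inr, Bool.false_eq_true, and_false, false_and, or_self] at huv
    · cases j using Fin.cases
      · simp [GRel]
      · simp [GRel, Fin.ext_iff]; omega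
    · cases j' using Fin.cases
      · simp [GRel]
      · simp [GRel, Fin.ext_iff]; omega

/-- The path starts at `(-(k+1), 0)` for `i = 0` and ends at `(k, 0)` for `i = 4k+1`. -/
def uPathPoint (k i : ℕ) : ℤ × ℕ :=
  if i ≤ k then (-(k + 1), i)
  else if i ≤ 3 * k + 1 then (-(k + 1) + (i - k : ℕ), k)
  else (k, 4 * k + 1 - i)

def uPath (k : ℕ) : Set GV := (fun i => .inl (uPathPoint k i)) '' Set.Iic (4 * k + 1)

lemma uPathPoint_adj (k : ℕ) {i : ℕ} (hi : i < 4 * k + 1) :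
    GraphG.Adj (.inl (uPathPoint k i)) (.inl (uPathPoint k (i + 1))) := by
  rw [GraphG, fromRel_adj]
  unfold uPathPoint
  split_ifs <;> simp [GRel, GridRel] <;> omega

lemma uPath_connected (k : ℕ) : (GraphG.induce (uPath k)).Connected :=
  induce_image_Iic_connected _ _ fun _ => uPathPoint_adj k

def k5Anchor (k : ℕ) : NegInt := ⟨-(k + 1), by omega⟩

def k33Anchor (k : ℕ) : NonnegInt := ⟨k, by omega⟩

lemma attachedK5_zero_mem_uPath (k : ℕ) : attachedK5 (k5Anchor k) 0 ∈ uPath k :=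
  ⟨0, Set.mem_Iic.2 (Nat.zero_le _), by simp [uPathPoint, attachedK5, k5Anchor]⟩

lemma attachedK33_zero_mem_uPath (k : ℕ) : attachedK33 (k33Anchor k) (.inl 0) ∈ uPath k :=
  ⟨4 * k + 1, Set.mem_Iic.2 le_rfl, by
    simp only [uPathPoint, attachedK33, k33Anchor]
    split_ifs <;> simp <;> omega⟩

def level : GV → ℤ
  | .inl p => max (max (-p.1 - 1) p.1) p.2
  | .inr (.inl (a, _)) => -a - 1
  | .inr (.inr (b, _)) => b

lemma level_uPathPoint (k i : ℕ) : level (.inl (uPathPoint k i)) = k := by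
  unfold uPathPoint
  split_ifs <;> simp [level] <;> omega

lemma level_of_mem_uPath {k : ℕ} {x : GV} (hx : x ∈ uPath k) : level x = k := by
  obtain ⟨i, -, rfl⟩ := hx
  exact level_uPathPoint k i

lemma level_attachedK5 (a : NegInt) (i : Fin 5) : level (attachedK5 a i) = -a - 1 := by
  cases i using Fin.cases
  · simp [attachedK5, level]; omega
  · rfl

lemma level_attachedK33 (b : NonnegInt) (u : Fin 3 ⊕ Fin 3) : level (attachedK33 b u) = b := by
  rcases u with j | j
  · cases j using Fin.cases
    · simp [attachedK33, level]; omega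
    · rfl
  · rfl

def k33ToI : Fin 3 ⊕ Fin 3 → IV
  | .inl j => Fin.cases (.inl 0) (fun j => .inr (.inl j)) j
  | .inr j => .inr (.inr j)

lemma graphI_adj_cases {v w : IV} (h : GraphI.Adj v w) :
    (∃ i j, K5.Adj i j ∧ v = .inl i ∧ w = .inl j) ∨
      ∃ u u', K33.Adj u u' ∧ v = k33ToI u ∧ w = k33ToI u' := by
  rw [GraphI, fromRel_adj] at h
  obtain ⟨hne, h⟩ := h
  rcases v with i | j | j <;> rcases w with i' | j' | j' <;>
    simp only [IRel, or_self, or_false, false_or] at h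
  · exact .inl ⟨i, i', fun h => hne (congrArg _ h), rfl, rfl⟩
  · exact .inr ⟨.inl 0, .inr j', by simp, by simp [k33ToI, h], rfl⟩
  · exact .inr ⟨.inl j.succ, .inr j', by simp, rfl, rfl⟩
  · exact .inr ⟨.inr j, .inl 0, by simp, rfl, by simp [k33ToI, h]⟩
  · exact .inr ⟨.inr j, .inl j'.succ, by simp, rfl, rfl⟩

def branchVertex (k : ℕ) : IV → GV
  | .inl i => attachedK5 (k5Anchor k) i
  | .inr (.inl j) => attachedK33 (k33Anchor k) (.inl j.succ)
  | .inr (.inr j) => attachedK33 (k33Anchor k) (.inr j)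

def branchSets (k : ℕ) (v : IV) : Set GV :=
  if v = .inl 0 then uPath k else {branchVertex k v}

def branchIndex : GV → IV
  | .inl _ => .inl 0
  | .inr (.inl (_, i)) => .inl i.succ
  | .inr (.inr (_, m)) =>
    if h : m.1 < 2 then .inr (.inl ⟨m, h⟩) else .inr (.inr ⟨m - 2, by omega⟩)

lemma branchIndex_branchVertex (k : ℕ) (v : IV) : branchIndex (branchVertex k v) = v := by
  rcases v with i | j | j
  · cases i using Fin.cases <;> rfl
  all_goals simp [branchVertex, attachedK33, branchIndex]; omega

lemma branchIndex_of_mem_branchSets {k : ℕ} {v : IV} {x : GV} (hx : x ∈ branchSets k v) :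
    branchIndex x = v := by
  unfold branchSets at hx
  split_ifs at hx with hv
  · obtain ⟨i, -, rfl⟩ := hx
    exact hv.symm
  · rw [Set.mem_singleton_iff.1 hx, branchIndex_branchVertex]

lemma attachedK5_mem_branchSets (k : ℕ) (i : Fin 5) :
    attachedK5 (k5Anchor k) i ∈ branchSets k (.inl i) := by
  unfold branchSets
  split_ifs with hi
  · cases Sum.inl.inj hi
    exact attachedK5_zero_mem_uPath k
  · rfl

lemma attachedK33_mem_branchSets (k : ℕ) (u : Fin 3 ⊕ Fin 3) :
    attachedK33 (k33Anchor k) u ∈ branchSets k (k33ToI u) := by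
  rcases u with j | j
  · cases j using Fin.cases
    · simpa [branchSets, k33ToI] using attachedK33_zero_mem_uPath k
    · rfl
  · rfl

lemma isMinorModel_branchSets (k : ℕ) : IsMinorModel GraphI GraphG (branchSets k) where
  nonempty v := by
    unfold branchSets
    split_ifs
    exacts [⟨_, attachedK5_zero_mem_uPath k⟩, Set.singleton_nonempty _]
  connected v := by
    by_cases hv : v = .inl 0
    · rw [show branchSets k v = uPath k from if_pos hv]
      exact uPath_connected k
    · rw [show branchSets k v = {branchVertex k v} from if_neg hv, induce_singleton_eq_top]
      exact connected_top
  pairwise_disjoint v w hvw := Set.disjoint_left.2 fun _ hv hw =>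
    hvw ((branchIndex_of_mem_branchSets hv).symm.trans (branchIndex_of_mem_branchSets hw))
  adj v w h := by
    rcases graphI_adj_cases h with ⟨i, j, hij, rfl, rfl⟩ | ⟨u, u', huu', rfl, rfl⟩
    · exact ⟨_, attachedK5_mem_branchSets k i, _, attachedK5_mem_branchSets k j,
        (attachedK5 _).map_adj hij⟩
    · exact ⟨_, attachedK33_mem_branchSets k u, _, attachedK33_mem_branchSets k u',
        (attachedK33 _).map_adj huu'⟩

lemma level_branchVertex (k : ℕ) (v : IV) : level (branchVertex k v) = k := by
  rcases v with i | j | j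
  · simp [branchVertex, level_attachedK5, k5Anchor]
  all_goals exact level_attachedK33 _ _

lemma level_of_mem_branchSets {k : ℕ} {v : IV} {x : GV} (hx : x ∈ branchSets k v) :
    level x = k := by
  unfold branchSets at hx
  split_ifs at hx
  · exact level_of_mem_uPath hx
  · rw [Set.mem_singleton_iff.1 hx, level_branchVertex]

/-- The graph `G` contains infinitely many pairwise vertex-disjoint
`I`-minors. -/
theorem statement6 :
    ∃ B : ℕ → IV → Set GV, DisjointModels GraphI GraphG B := by
  refine ⟨branchSets, isMinorModel_branchSets, fun k l hkl => ?_⟩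
  refine Set.disjoint_left.2 fun x hk hl => hkl ?_
  obtain ⟨v, hv⟩ := Set.mem_iUnion.1 hk
  obtain ⟨w, hw⟩ := Set.mem_iUnion.1 hl
  exact_mod_cast (level_of_mem_branchSets hv).symm.trans (level_of_mem_branchSets hw)
end

section
/- For every finite set S of vertices of the graph G, the graph G − S (the induced subgraph on the complement of S) has exactly one infinite connected component. -/
open SimpleGraph

/-!
Choose `N` with every vertex of `S` sitting at a grid point `(x, y)` with `|x| < N` and `y < N`.
The vertices of `G` outside this box (grid points with `|x| ≥ N` or `y ≥ N`, together with the
copies attached to them) induce a connected subgraph, since each is joined to `(N, N)` through a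
column and a row outside the box. This set avoids `S` and has finite complement, so it lies in a
single component of `G − S`, which is infinite; every other component is confined to the finite
complement.
-/

namespace SimpleGraph

variable {V W : Type*} {G : SimpleGraph V}

lemma connected_induce_range {H : SimpleGraph W} (hH : H.Connected) (f : H →g G) :
    (G.induce (Set.range f)).Connected :=
  hH.map ⟨Set.rangeFactorization f, f.map_rel⟩ Set.rangeFactorization_surjective

lemma connected_induce_of_walks {s : Set V} {u : V} (hu : u ∈ s)
    (walk : ∀ v ∈ s, ∃ p : G.Walk u v, ∀ x ∈ p.support, x ∈ s) :
    (G.induce s).Connected := by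
  refine connected_iff_exists_forall_reachable _ |>.2 ⟨⟨u, hu⟩, fun ⟨v, hv⟩ => ?_⟩
  obtain ⟨p, hp⟩ := walk v hv
  exact ⟨p.induce s hp⟩

lemma existsUnique_infinite_connectedComponent [Infinite V] {S T : Set V}
    (hT : (G.induce T).Connected) (hTS : T ⊆ Sᶜ) (hTc : Tᶜ.Finite) :
    ∃! C : (G.induce Sᶜ).ConnectedComponent, C.supp.Infinite := by
  let ι := induceHomOfLE G hTS
  obtain ⟨t⟩ := hT.nonempty
  have : Infinite T := (compl_compl T ▸ hTc.infinite_compl).to_subtype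
  have mem_supp (x : T) : ι x ∈ ((G.induce Sᶜ).connectedComponentMk (ι t)).supp :=
    ConnectedComponent.sound ((hT.preconnected t x).map ι.toHom).symm
  refine ⟨_, Set.infinite_of_injective_forall_mem (α := T) ι.injective mem_supp, ?_⟩
  intro C hC
  obtain ⟨v, hvC, hvT⟩ : ∃ v ∈ C.supp, v.1 ∈ T := by
    by_contra! h
    exact hC ((hTc.preimage Subtype.val_injective.injOn).subset h)
  rw [← (C.mem_supp_iff v).1 hvC]
  exact mem_supp ⟨v, hvT⟩

end SimpleGraph

namespace GraphG

open Set Sum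

/-- The half-grid vertex at which a vertex of `G` sits: attached vertices project to their
attachment vertex `(a, 0)`. -/
def gridPoint : GV → ℤ × ℕ
  | inl p => p
  | inr (inl w) => (w.1.1, 0)
  | inr (inr w) => (w.1.1, 0)

def gridNorm (p : ℤ × ℕ) : ℕ := max p.1.natAbs p.2

def far (N : ℕ) : Set GV := {v | N ≤ gridNorm (gridPoint v)}

def row (y : ℕ) : Set GV := range fun x : ℤ => inl (x, y)

def column (x : ℤ) : Set GV := range fun y : ℕ => inl (x, y)

lemma adj_inl_of_gridRel {p q : ℤ × ℕ} (h : GridRel p q) :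
    GraphG.Adj (inl p) (inl q) := by
  refine (fromRel_adj _ _ _).2 ⟨fun hpq => ?_, Or.inl h⟩
  rcases inl_injective hpq with rfl
  rcases h with ⟨h, -⟩ | ⟨-, h⟩ <;> omega

lemma connected_induce_row (y : ℕ) : (GraphG.induce (row y)).Connected := by
  refine connected_induce_range (H := hasse ℤ) ⟨hasse_preconnected_of_succ ℤ⟩
    ⟨fun x => inl (x, y), fun {x x'} h => ?_⟩
  rcases hasse_adj.1 h with h | h <;> rw [Order.covBy_iff_add_one_eq] at h <;> subst h
  · exact adj_inl_of_gridRel (Or.inl ⟨rfl, rfl⟩)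
  · exact GraphG.adj_symm (adj_inl_of_gridRel (Or.inl ⟨rfl, rfl⟩))

lemma connected_induce_column (x : ℤ) : (GraphG.induce (column x)).Connected := by
  refine connected_induce_range (H := hasse ℕ) ⟨hasse_preconnected_of_succ ℕ⟩
    ⟨fun y => inl (x, y), fun {y y'} h => ?_⟩
  rcases hasse_adj.1 h with h | h <;> rw [Nat.covBy_iff_add_one_eq] at h <;> subst h
  · exact adj_inl_of_gridRel (Or.inr ⟨rfl, rfl⟩)
  · exact GraphG.adj_symm (adj_inl_of_gridRel (Or.inr ⟨rfl, rfl⟩))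

lemma connected_induce_column_union_row (x : ℤ) (y : ℕ) :
    (GraphG.induce (column x ∪ row y)).Connected :=
  induce_union_connected (connected_induce_column x).preconnected
    (connected_induce_row y).preconnected ⟨inl (x, y), ⟨y, rfl⟩, ⟨x, rfl⟩⟩

/-- Every attached vertex is adjacent to its attachment vertex, except the two new left-side
vertices of a `K₃,₃`, which reach it through a right-side vertex. -/
lemma connected_induce_gridPoint_preimage (p : ℤ × ℕ) :
    (GraphG.induce (gridPoint ⁻¹' {p})).Connected := by
  refine connected_induce_of_walks (u := inl p) rfl ?_
  rintro (q | w | w) hw <;> simp only [mem_preimage, mem_singleton_iff, gridPoint] at hw <;>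
    subst hw
  · exact ⟨.nil, by simp [gridPoint]⟩
  · have h : GraphG.Adj (inl (w.1.1, 0)) (inr (inl w)) := by simp [GraphG, GRel]
    exact ⟨.cons h .nil, by simp [gridPoint]⟩
  · obtain ⟨b, i⟩ := w
    have h2 : GraphG.Adj (inl (b.1, 0)) (inr (inr (b, 2))) := by simp [GraphG, GRel]
    by_cases hi : 2 ≤ (i : ℕ)
    · have h : GraphG.Adj (inl (b.1, 0)) (inr (inr (b, i))) := by simp [GraphG, GRel, hi]
      exact ⟨.cons h .nil, by simp [gridPoint]⟩
    · have h : GraphG.Adj (inr (inr (b, 2))) (inr (inr (b, i))) :=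
        (fromRel_adj _ _ _).2 ⟨fun h => by cases h; simp at hi, Or.inr ⟨rfl, not_le.1 hi, le_rfl⟩⟩
      exact ⟨.cons h2 (.cons h .nil), by simp [gridPoint]⟩

lemma column_subset_far {N : ℕ} {x : ℤ} (hx : N ≤ x.natAbs) : column x ⊆ far N := by
  rintro _ ⟨y, rfl⟩
  exact hx.trans (le_max_left _ _)

lemma row_subset_far {N y : ℕ} (hy : N ≤ y) : row y ⊆ far N := by
  rintro _ ⟨x, rfl⟩
  exact hy.trans (le_max_right _ _)

/-- A far vertex `v` is joined to `(N, N)` through its own copy, a column and a row: the column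
through `v` if `|x| ≥ N`, the row through `v` if `y ≥ N`. -/
lemma connected_induce_far (N : ℕ) : (GraphG.induce (far N)).Connected := by
  have hcorner_far : N ≤ gridNorm (N, N) := le_max_right _ _
  refine induce_connected_of_patches (inl ((N : ℤ), N)) hcorner_far fun {v} hv => ?_
  set p := gridPoint v
  obtain ⟨x, y, hfar, hcorner, hp⟩ : ∃ x y, column x ∪ row y ⊆ far N ∧
      inl ((N : ℤ), N) ∈ column x ∪ row y ∧ inl p ∈ column x ∪ row y := by
    rcases le_max_iff.1 (show N ≤ max p.1.natAbs p.2 from hv) with hx | hy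
    · exact ⟨p.1, N, union_subset (column_subset_far hx) (row_subset_far le_rfl),
        Or.inr ⟨N, rfl⟩, Or.inl ⟨p.2, rfl⟩⟩
    · exact ⟨N, p.2, union_subset (column_subset_far le_rfl) (row_subset_far hy),
        Or.inl ⟨N, rfl⟩, Or.inr ⟨p.1, rfl⟩⟩
  have hfibre : gridPoint ⁻¹' {p} ⊆ far N := fun w hw => by
    simpa [far, show gridPoint w = p from hw] using hv
  have hconn := induce_union_connected (connected_induce_gridPoint_preimage p).preconnected
    (connected_induce_column_union_row x y).preconnected ⟨inl p, rfl, hp⟩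
  exact ⟨_, union_subset hfibre hfar, Or.inr hcorner, Or.inl rfl, hconn.preconnected _ _⟩

def copyIndex : GV → Option (Fin 4 ⊕ Fin 5)
  | inl _ => none
  | inr (inl w) => some (inl w.2)
  | inr (inr w) => some (inr w.2)

lemma injective_gridPoint_copyIndex : Function.Injective fun v => (gridPoint v, copyIndex v) := by
  rintro (p | w | w) (q | w' | w') h <;>
    simp_all [gridPoint, copyIndex, Prod.ext_iff, Subtype.ext_iff]

lemma finite_preimage_gridPoint {B : Set (ℤ × ℕ)} (hB : B.Finite) : (gridPoint ⁻¹' B).Finite :=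
  (hB.prod finite_univ).preimage injective_gridPoint_copyIndex.injOn |>.subset
    fun _ hv => ⟨hv, trivial⟩

lemma finite_compl_far (N : ℕ) : (far N)ᶜ.Finite := by
  change (gridPoint ⁻¹' {p | ¬N ≤ gridNorm p}).Finite
  refine finite_preimage_gridPoint <| ((finite_Icc (-N : ℤ) N).prod (finite_Iio N)).subset ?_
  rintro ⟨x, y⟩ h
  simp only [mem_ofPred_eq, gridNorm] at h
  exact ⟨mem_Icc.2 ⟨by omega, by omega⟩, mem_Iio.2 (by omega)⟩

lemma exists_far_subset_compl {S : Set GV} (hS : S.Finite) : ∃ N, far N ⊆ Sᶜ := by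
  obtain ⟨M, hM⟩ := (hS.image (gridNorm ∘ gridPoint)).bddAbove
  exact ⟨M + 1, fun v hv hvS => by
    have := hM (mem_image_of_mem _ hvS)
    simp only [far, mem_ofPred_eq, Function.comp_apply] at hv this
    omega⟩

end GraphG

/-- For every finite set `S` of vertices of `G`, the graph `G − S` has
exactly one infinite connected component. -/
theorem statement7 (S : Set GV) (hS : S.Finite) :
    ∃! C : (GraphG.induce Sᶜ).ConnectedComponent, C.supp.Infinite := by
  obtain ⟨N, hN⟩ := GraphG.exists_far_subset_compl hS
  exact existsUnique_infinite_connectedComponent (GraphG.connected_induce_far N) hN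
    (GraphG.finite_compl_far N)
end

section
/- Let (P_i)_{i ∈ ℕ} be an infinite family of pairwise vertex-disjoint paths in the graph G such that each P_i joins a vertex (a_i, 0) with a_i < 0 to a vertex (b_i, 0) with b_i ≥ 0, and for each i let C_i be the unique infinite component of G − V(P_i). Then the intersection ⋂_{i ∈ ℕ} C_i of the vertex sets of these components is empty. -/
/-!
Close a walk `P` from `(a, 0)` to `(b, 0)`, `a ≤ b`, by a curve running below the x-axis,
and attach to each vertex the parity of the number of times this closed curve crosses the
vertical ray going down from the centre of the face to the upper left of the vertex (a vertex
of an attached gadget uses its attachment vertex). This parity is constant along the edges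
of `G − V(P)` and equals `1` at only finitely many vertices, so it is `0` on the infinite
component. Given a vertex `v` in column `c` at height `y`, only finitely many of the
disjoint paths meet the finite set of vertices in columns between `c` and `0` up to height
`y`; any other `P i` has `a i < c ≤ b i` and avoids column `c` up to height `y`, so the parity
of `v` with respect to `P i` is `1` and `v` is not in its infinite component.
-/

open SimpleGraph

namespace List

theorem countP_or_of_forall_not_and {α : Type*} {p q : α → Bool} {l : List α}
    (h : ∀ x ∈ l, ¬(p x ∧ q x)) :
    l.countP (fun x => p x || q x) = l.countP p + l.countP q := by
  induction l with
  | nil => rfl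
  | cons x l ih => grind

end List

theorem Set.Finite.setOf_inter_nonempty {ι α : Type*} {S : ι → Set α}
    (hS : Pairwise fun i j => Disjoint (S i) (S j)) {F : Set α} (hF : F.Finite) :
    {i | (S i ∩ F).Nonempty}.Finite :=
  ((Set.finite_iUnion_iff fun _ _ hij => (hS hij).mono Set.inter_subset_left
    Set.inter_subset_left).mp (hF.subset (Set.iUnion_subset fun _ => Set.inter_subset_right))).2

namespace SimpleGraph

variable {V : Type*} {G : SimpleGraph V}

theorem Reachable.apply_eq_of_forall_adj {β : Sort*} {f : V → β}
    (hf : ∀ ⦃v w⦄, G.Adj v w → f v = f w) {u v : V} (h : G.Reachable u v) : f u = f v := by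
  obtain ⟨W⟩ := h
  induction W with
  | nil => rfl
  | cons hadj _ ih => exact (hf hadj).trans ih

theorem Walk.countP_darts_bne_mod_two (f : V → Bool) {u v : V} (W : G.Walk u v) :
    W.darts.countP (fun d => f d.fst != f d.snd) % 2 = (f u != f v).toNat := by
  induction W with
  | nil => simp
  | @cons u w v _ W ih =>
    simp only [darts_cons, List.countP_cons]
    cases hu : f u <;> cases hw : f w <;> cases hv : f v <;> simp [hw, hv] at ih ⊢ <;> omega

end SimpleGraph

def gridPos : GV → ℤ × ℕ
  | Sum.inl p => p
  | Sum.inr (Sum.inl w) => (w.1.1, 0)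
  | Sum.inr (Sum.inr w) => (w.1.1, 0)

@[simp]
theorem gridPos_inl (p : ℤ × ℕ) : gridPos (Sum.inl p) = p := rfl

theorem finite_preimage_gridPos {s : Set (ℤ × ℕ)} (hs : s.Finite) :
    (gridPos ⁻¹' s).Finite := by
  let gadgetIndex : GV → Option (Fin 4 ⊕ Fin 5)
    | Sum.inl _ => none
    | Sum.inr (Sum.inl w) => some (Sum.inl w.2)
    | Sum.inr (Sum.inr w) => some (Sum.inr w.2)
  have hinj : Function.Injective fun w => (gridPos w, gadgetIndex w) := by
    rintro (p | ⟨a, i⟩ | ⟨b, i⟩) (q | ⟨a', i'⟩ | ⟨b', i'⟩) h <;>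
      simp_all [gridPos, gadgetIndex, Prod.ext_iff, Subtype.ext_iff]
  exact (hs.prod Set.finite_univ).preimage hinj.injOn |>.subset fun w hw => ⟨hw, trivial⟩

theorem GraphG.gridPos_eq_or_adj {u w : GV} (h : GraphG.Adj u w) :
    gridPos u = gridPos w ∨ ∃ p q, u = Sum.inl p ∧ w = Sum.inl q ∧ HalfGrid.Adj p q := by
  obtain ⟨hne, h⟩ := h
  rcases u with p | ⟨a, i⟩ | ⟨b, i⟩ <;> rcases w with q | ⟨a', i'⟩ | ⟨b', i'⟩ <;>
    simp_all [GRel, gridPos, HalfGrid] <;> aesop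

def leftOf (c : ℤ) (w : GV) : Bool := decide ((gridPos w).1 < c)

def inColumn (c : ℤ) (y : ℕ) (w : GV) : Bool :=
  decide ((gridPos w).1 = c ∧ (gridPos w).2 ≤ y)

def crossesBelow (c : ℤ) (y : ℕ) (d : GraphG.Dart) : Bool :=
  (leftOf c d.fst != leftOf c d.snd) && (inColumn c y d.fst || inColumn c y d.snd)

section Crossings

variable {c : ℤ} {y : ℕ}

theorem crossesBelow_or_crossesBelow_add_one {d : GraphG.Dart} (h₁ : d.fst ≠ Sum.inl (c, y))
    (h₂ : d.snd ≠ Sum.inl (c, y)) :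
    (crossesBelow c y d || crossesBelow (c + 1) y d) =
      (inColumn c y d.fst != inColumn c y d.snd) := by
  obtain ⟨⟨u, w⟩, hadj⟩ := d
  rcases GraphG.gridPos_eq_or_adj hadj with h | ⟨p, q, rfl, rfl, hpq⟩
  · simp [crossesBelow, leftOf, inColumn, h]
  · simp only [HalfGrid, fromRel_adj, GridRel] at hpq
    grind [crossesBelow, leftOf, inColumn, gridPos]

theorem not_crossesBelow_and_crossesBelow_add_one (d : GraphG.Dart) :
    ¬(crossesBelow c y d ∧ crossesBelow (c + 1) y d) := by
  obtain ⟨⟨u, w⟩, hadj⟩ := d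
  rcases GraphG.gridPos_eq_or_adj hadj with h | ⟨p, q, rfl, rfl, hpq⟩
  · simp [crossesBelow, leftOf, h]
  · simp only [HalfGrid, fromRel_adj, GridRel] at hpq
    grind [crossesBelow, leftOf, inColumn, gridPos]

theorem crossesBelow_succ {d : GraphG.Dart} (h₁ : d.fst ≠ Sum.inl (c, y + 1))
    (h₂ : d.snd ≠ Sum.inl (c, y + 1)) : crossesBelow c (y + 1) d = crossesBelow c y d := by
  obtain ⟨⟨u, w⟩, hadj⟩ := d
  rcases GraphG.gridPos_eq_or_adj hadj with h | ⟨p, q, rfl, rfl, hpq⟩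
  · simp [crossesBelow, leftOf, h]
  · simp only [HalfGrid, fromRel_adj, GridRel] at hpq
    grind [crossesBelow, leftOf, inColumn, gridPos]

theorem crossesBelow_of_le {d : GraphG.Dart} (h₁ : (gridPos d.fst).2 ≤ y)
    (h₂ : (gridPos d.snd).2 ≤ y) : crossesBelow c y d = (leftOf c d.fst != leftOf c d.snd) := by
  obtain ⟨⟨u, w⟩, hadj⟩ := d
  rcases GraphG.gridPos_eq_or_adj hadj with h | ⟨p, q, rfl, rfl, hpq⟩
  · simp [crossesBelow, leftOf, h]
  · simp only [HalfGrid, fromRel_adj, GridRel] at hpq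
    grind [crossesBelow, leftOf, inColumn, gridPos]

end Crossings

section WindingParity

variable {a b : ℤ} (p : GraphG.Walk (Sum.inl (a, 0)) (Sum.inl (b, 0)))

/-- `crossesBelow c y` counts the crossings of `p` with the ray going down from
`(c - 1/2, y + 1/2)`, and the `if` term the crossing of that ray with the curve closing `p`
below the x-axis. -/
def windingParity (q : ℤ × ℕ) : ℕ :=
  (p.darts.countP (crossesBelow q.1 q.2) + if a < q.1 ∧ q.1 ≤ b then 1 else 0) % 2

variable {p} {c : ℤ} {y : ℕ}

theorem windingParity_add_one_fst (hab : a ≤ b) (h : Sum.inl (c, y) ∉ p.support) :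
    windingParity p (c + 1, y) = windingParity p (c, y) := by
  have hsplit : p.darts.countP (fun d => inColumn c y d.fst != inColumn c y d.snd) =
      p.darts.countP (crossesBelow c y) + p.darts.countP (crossesBelow (c + 1) y) := by
    rw [← List.countP_or_of_forall_not_and fun d _ =>
      not_crossesBelow_and_crossesBelow_add_one d]
    refine List.countP_congr fun d hd => ?_
    rw [crossesBelow_or_crossesBelow_add_one
      (ne_of_mem_of_not_mem (p.dart_fst_mem_support_of_mem_darts hd) h)
      (ne_of_mem_of_not_mem (p.dart_snd_mem_support_of_mem_darts hd) h)]
  have hbox : _ = (decide (a = c ∧ 0 ≤ y) != decide (b = c ∧ 0 ≤ y)).toNat :=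
    p.countP_darts_bne_mod_two (inColumn c y)
  rw [hsplit] at hbox
  dsimp only [windingParity]
  by_cases hac : a = c <;> by_cases hbc : b = c <;> simp [hac, hbc] at hbox <;>
    split_ifs <;> omega

theorem windingParity_add_one_snd (h : Sum.inl (c, y + 1) ∉ p.support) :
    windingParity p (c, y + 1) = windingParity p (c, y) := by
  dsimp only [windingParity]
  rw [List.countP_congr fun d hd => by
    rw [crossesBelow_succ (ne_of_mem_of_not_mem (p.dart_fst_mem_support_of_mem_darts hd) h)
      (ne_of_mem_of_not_mem (p.dart_snd_mem_support_of_mem_darts hd) h)]]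

theorem windingParity_eq_zero_of_le (hab : a ≤ b)
    (hy : ∀ w ∈ p.support, (gridPos w).2 ≤ y) : windingParity p (c, y) = 0 := by
  have hhalf : _ = (decide (a < c) != decide (b < c)).toNat :=
    p.countP_darts_bne_mod_two (leftOf c)
  dsimp only [windingParity]
  rw [List.countP_congr fun d hd => by
    rw [crossesBelow_of_le (hy _ (p.dart_fst_mem_support_of_mem_darts hd))
      (hy _ (p.dart_snd_mem_support_of_mem_darts hd))]]
  by_cases hac : a < c <;> by_cases hbc : b < c <;> simp [hac, hbc] at hhalf <;>
    split_ifs <;> omega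

theorem windingParity_eq_one (hc : a < c ∧ c ≤ b)
    (h : ∀ w ∈ p.support, ¬((gridPos w).1 = c ∧ (gridPos w).2 ≤ y)) :
    windingParity p (c, y) = 1 := by
  dsimp only [windingParity]
  rw [List.countP_eq_zero.mpr fun d hd => by
    simp [crossesBelow, inColumn, h _ (p.dart_fst_mem_support_of_mem_darts hd),
      h _ (p.dart_snd_mem_support_of_mem_darts hd)], if_pos hc]

theorem exists_mem_support_of_windingParity_eq_one (h : windingParity p (c, y) = 1)
    (hc : ¬(a < c ∧ c ≤ b)) : ∃ w ∈ p.support, (gridPos w).1 = c := by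
  dsimp only [windingParity] at h
  rw [if_neg hc] at h
  obtain ⟨d, hd, hcross⟩ :=
    List.countP_pos_iff.mp (by omega : 0 < p.darts.countP (crossesBelow c y))
  simp only [crossesBelow, inColumn, Bool.and_eq_true, Bool.or_eq_true, decide_eq_true_eq]
    at hcross
  rcases hcross.2 with h' | h'
  · exact ⟨d.fst, p.dart_fst_mem_support_of_mem_darts hd, h'.1⟩
  · exact ⟨d.snd, p.dart_snd_mem_support_of_mem_darts hd, h'.1⟩

theorem windingParity_eq_of_adj (hab : a ≤ b) {u w : GV} (hu : u ∉ p.support)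
    (hw : w ∉ p.support) (h : GraphG.Adj u w) :
    windingParity p (gridPos u) = windingParity p (gridPos w) := by
  rcases GraphG.gridPos_eq_or_adj h with h | ⟨⟨c, y⟩, ⟨c', y'⟩, rfl, rfl, hpq⟩
  · rw [h]
  · simp only [HalfGrid, fromRel_adj, GridRel] at hpq
    obtain ⟨-, (⟨rfl, rfl⟩ | ⟨rfl, rfl⟩) | ⟨rfl, rfl⟩ | ⟨rfl, rfl⟩⟩ := hpq
    · exact (windingParity_add_one_fst hab hu).symm
    · exact (windingParity_add_one_snd hw).symm
    · exact windingParity_add_one_fst hab hw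
    · exact windingParity_add_one_snd hu

theorem finite_setOf_windingParity_eq_one (hab : a ≤ b) :
    {w | windingParity p (gridPos w) = 1}.Finite := by
  have hsupp : {w | w ∈ p.support}.Finite := p.support.finite_toSet
  obtain ⟨y, hy⟩ := (hsupp.image fun w => (gridPos w).2).bddAbove
  have hcols := (hsupp.image fun w => (gridPos w).1).union (Set.finite_Ioc a b)
  refine (finite_preimage_gridPos (hcols.prod (Set.finite_Iic y))).subset
    fun w hw => ⟨?_, Set.mem_Iic.mpr ?_⟩
  · by_cases hc : a < (gridPos w).1 ∧ (gridPos w).1 ≤ b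
    · exact Or.inr hc
    · exact Or.inl (exists_mem_support_of_windingParity_eq_one hw hc)
  · by_contra! hlt
    have h0 : windingParity p (gridPos w) = 0 :=
      windingParity_eq_zero_of_le hab fun w' hw' => (hy ⟨w', hw', rfl⟩).trans hlt.le
    exact zero_ne_one (h0.symm.trans hw)

theorem finite_supp_of_windingParity_eq_one (hab : a ≤ b)
    (v : ({w | w ∈ p.support}ᶜ : Set GV)) (hv : windingParity p (gridPos v) = 1) :
    ((GraphG.induce {w | w ∈ p.support}ᶜ).connectedComponentMk v).supp.Finite := by
  refine ((finite_setOf_windingParity_eq_one (p := p) hab).preimage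
    Subtype.val_injective.injOn).subset fun u hu => ?_
  rw [ConnectedComponent.mem_supp_iff, ConnectedComponent.eq] at hu
  have hconst : ∀ ⦃u w : ({w | w ∈ p.support}ᶜ : Set GV)⦄,
      (GraphG.induce {w | w ∈ p.support}ᶜ).Adj u w →
        windingParity p (gridPos u) = windingParity p (gridPos w) :=
    fun u w h => windingParity_eq_of_adj hab u.2 w.2 h
  show windingParity p (gridPos u) = 1
  rw [hu.apply_eq_of_forall_adj hconst, hv]

end WindingParity

theorem statement9_general (a b : ℕ → ℤ) (ha : ∀ i, a i < 0) (hb : ∀ i, 0 ≤ b i)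
    (P : ∀ i : ℕ, GraphG.Walk (Sum.inl (a i, 0)) (Sum.inl (b i, 0)))
    (hdisj : ∀ ⦃i j : ℕ⦄, i ≠ j →
      Disjoint {v | v ∈ (P i).support} {v | v ∈ (P j).support})
    (C : ℕ → Set GV)
    (hC : ∀ i, ∃ D : (GraphG.induce {v | v ∈ (P i).support}ᶜ).ConnectedComponent,
      D.supp.Infinite ∧ C i = Subtype.val '' D.supp) :
    ⋂ i, C i = ∅ := by
  refine Set.eq_empty_of_forall_notMem fun v hv => ?_
  obtain ⟨⟨c, y⟩, hcy⟩ : ∃ q, gridPos v = q := ⟨_, rfl⟩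
  obtain ⟨i, hi⟩ := ((finite_preimage_gridPos ((Set.finite_uIcc c 0).prod
    (Set.finite_Iic y))).setOf_inter_nonempty hdisj).infinite_compl.nonempty
  have hoff : ∀ w ∈ (P i).support, gridPos w ∉ Set.uIcc c 0 ×ˢ Set.Iic y :=
    fun w hw hwF => hi ⟨w, hw, hwF⟩
  have hai := hoff _ (P i).start_mem_support
  have hbi := hoff _ (P i).end_mem_support
  simp only [gridPos_inl, Set.mem_prod, Set.mem_uIcc, Set.mem_Iic, zero_le, and_true] at hai hbi
  have hwind : windingParity (P i) (c, y) = 1 := by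
    refine windingParity_eq_one ⟨by have := ha i; omega, by have := hb i; omega⟩
      fun w hw hwc => hoff w hw ?_
    simp only [Set.mem_prod, Set.mem_uIcc, Set.mem_Iic]
    omega
  obtain ⟨D, hDinf, hCD⟩ := hC i
  obtain ⟨u, huD, rfl⟩ : v ∈ Subtype.val '' D.supp := hCD ▸ Set.mem_iInter.mp hv i
  rw [ConnectedComponent.mem_supp_iff] at huD
  exact hDinf (huD ▸
    finite_supp_of_windingParity_eq_one ((ha i).le.trans (hb i)) u (hcy ▸ hwind))

/-- If `(P i)` is an infinite family of pairwise vertex-disjoint paths in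
`G`, each joining a vertex `(a i, 0)` with `a i < 0` to a vertex `(b i, 0)` with
`b i ≥ 0`, and `C i` is (the vertex set of) the unique infinite component of
`G − V(P i)`, then `⋂ i, C i = ∅`. -/
theorem statement9 (a b : ℕ → ℤ) (ha : ∀ i, a i < 0) (hb : ∀ i, 0 ≤ b i)
    (P : ∀ i : ℕ, GraphG.Walk (Sum.inl (a i, 0)) (Sum.inl (b i, 0)))
    (hpath : ∀ i, (P i).IsPath)
    (hdisj : ∀ ⦃i j : ℕ⦄, i ≠ j →
      Disjoint {v | v ∈ (P i).support} {v | v ∈ (P j).support})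
    (C : ℕ → Set GV)
    (hC : ∀ i, ∃ D : (GraphG.induce {v | v ∈ (P i).support}ᶜ).ConnectedComponent,
      D.supp.Infinite ∧ C i = Subtype.val '' D.supp) :
    ⋂ i, C i = ∅ :=
  statement9_general a b ha hb P hdisj C hC
end

section
/- Every 2-connected subgraph of the graph G is contained in the half-grid subgraph, in one of the attached K₅-subgraphs, or in one of the attached K₃,₃-subgraphs; consequently, the maximal 2-connected subgraphs of G are exactly the half-grid together with the attached K₅-subgraphs and the attached K₃,₃-subgraphs. -/
open SimpleGraph

/-- A graph is 2-connected if it has at least 3 vertices, is connected, and remains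
connected after the deletion of any single vertex. -/
def TwoConnected {α : Type*} (X : SimpleGraph α) : Prop :=
  (∃ x y z : α, x ≠ y ∧ y ≠ z ∧ x ≠ z) ∧ X.Connected ∧
    ∀ v : α, (X.induce {w | w ≠ v}).Connected

/-- The half-grid as a subgraph of `G`. -/
def gridSub : GraphG.Subgraph :=
  (⊤ : GraphG.Subgraph).induce (Set.range Sum.inl)

/-- The attached `K₅` at `(a,0)` as a subgraph of `G`. -/
def k5Sub (a : NegInt) : GraphG.Subgraph :=
  (⊤ : GraphG.Subgraph).induce (K5copy a)

/-- The attached `K₃,₃` at `(b,0)` as a subgraph of `G`. -/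
def k33Sub (b : NonnegInt) : GraphG.Subgraph :=
  (⊤ : GraphG.Subgraph).induce (K33copy b)


/-!
Apart from its attachment vertex `c`, an attached `K₅` or `K₃,₃` has no neighbours outside
itself. So if a 2-connected subgraph `H` contains a non-grid vertex `u`, every other vertex of
`H` is joined to `u` by a walk avoiding `c` and therefore lies in that copy; otherwise `H` lies
in the half-grid. Conversely the half-grid, each `K₅` and each `K₃,₃` are 2-connected, and each
of them has a vertex lying in none of the others, so they form an antichain; a cover of the
2-connected subgraphs by an antichain of 2-connected ones is exactly the set of maximal ones.
-/

theorem setOf_maximal_eq {α : Type*} [PartialOrder α] {p : α → Prop} {s : Set α}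
    (hp : ∀ P ∈ s, p P) (hcover : ∀ x, p x → ∃ P ∈ s, x ≤ P) (hanti : IsAntichain (· ≤ ·) s) :
    {x | p x ∧ ∀ y, p y → x ≤ y → y = x} = s := by
  ext x
  constructor
  · rintro ⟨hx, hmax⟩
    obtain ⟨P, hP, hxP⟩ := hcover x hx
    exact hmax P (hp P hP) hxP ▸ hP
  · refine fun hx => ⟨hp x hx, fun y hy hxy => ?_⟩
    obtain ⟨P, hP, hyP⟩ := hcover y hy
    obtain rfl := hanti.eq hx hP (hxy.trans hyP)
    exact le_antisymm hyP hxy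

namespace SimpleGraph

variable {V : Type*} {G : SimpleGraph V}

theorem Walk.end_mem_of_notMem_support {S : Set V} {c : V}
    (hS : ∀ u ∈ S, ∀ w, G.Adj u w → w = c ∨ w ∈ S) {x y : V} (p : G.Walk x y)
    (hx : x ∈ S) (hc : c ∉ p.support) : y ∈ S := by
  induction p with
  | nil => exact hx
  | cons h p ih =>
    rw [support_cons, List.mem_cons, not_or] at hc
    refine ih ((hS _ hx _ h).resolve_left ?_) hc.2
    rintro rfl
    exact hc.2 p.start_mem_support

theorem connected_of_pairwise_adj [Nonempty V] (hadj : Pairwise G.Adj) : G.Connected := by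
  obtain rfl : G = ⊤ := by
    ext u v
    exact ⟨Adj.ne, fun h => hadj h⟩
  exact connected_top

theorem connected_of_forall_adj_of_mem_of_notMem {L : Set V} {l r : V} (hl : l ∈ L)
    (hr : r ∉ L) (hadj : ∀ x ∈ L, ∀ y ∉ L, G.Adj x y) : G.Connected := by
  refine (connected_iff_exists_forall_reachable G).mpr ⟨r, fun w => ?_⟩
  by_cases hw : w ∈ L
  · exact (hadj w hw r hr).reachable.symm
  · exact (hadj l hl r hr).reachable.symm.trans (hadj l hl w hw).reachable

def Subgraph.induceTopCoeIso (s : Set V) : ((⊤ : G.Subgraph).induce s).coe ≃g G.induce s where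
  __ := Equiv.refl _
  map_rel_iff' {a b} := ⟨fun h => ⟨a.2, b.2, h⟩, fun h => h.2.2⟩

end SimpleGraph

namespace TwoConnected

variable {V W : Type*}

theorem of_iso {X : SimpleGraph V} {Y : SimpleGraph W} (e : X ≃g Y) (h : TwoConnected X) :
    TwoConnected Y := by
  obtain ⟨⟨x, y, z, hxy, hyz, hxz⟩, hconn, hdel⟩ := h
  refine ⟨⟨e x, e y, e z, e.injective.ne hxy, e.injective.ne hyz, e.injective.ne hxz⟩,
    e.connected_iff.mp hconn, fun v => ?_⟩
  refine (Iso.connected_iff (e.induce (s := {w | w ≠ e.symm v}) ?_)).mp (hdel (e.symm v))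
  exact e.toEquiv.bijOn fun w => (e.toEquiv.eq_symm_apply).not.symm

theorem of_pairwise_adj {X : SimpleGraph V} (h3 : ∃ x y z : V, x ≠ y ∧ y ≠ z ∧ x ≠ z)
    (hadj : Pairwise X.Adj) : TwoConnected X := by
  obtain ⟨x, y, z, hxy, hyz, hxz⟩ := h3
  have : Nonempty V := ⟨x⟩
  refine ⟨⟨x, y, z, hxy, hyz, hxz⟩, connected_of_pairwise_adj hadj, fun v => ?_⟩
  have : Nonempty {w | w ≠ v} := by
    rcases eq_or_ne x v with rfl | hxv
    exacts [⟨⟨y, hxy.symm⟩⟩, ⟨⟨x, hxv⟩⟩]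
  exact connected_of_pairwise_adj fun u w huw => hadj fun h => huw (Subtype.ext h)

theorem of_forall_adj_of_mem_of_notMem {X : SimpleGraph V} (L : Set V)
    (hL : ∃ x ∈ L, ∃ y ∈ L, x ≠ y) (hR : ∃ x ∉ L, ∃ y ∉ L, x ≠ y)
    (hadj : ∀ x ∈ L, ∀ y ∉ L, X.Adj x y) : TwoConnected X := by
  obtain ⟨l, hl, l', hl', hll'⟩ := hL
  obtain ⟨r, hr, r', hr', hrr'⟩ := hR
  refine ⟨⟨l, l', r, hll', ne_of_mem_of_not_mem hl' hr, ne_of_mem_of_not_mem hl hr⟩,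
    connected_of_forall_adj_of_mem_of_notMem hl hr hadj, fun v => ?_⟩
  have avoid : ∀ {x y : V}, x ≠ y → ∃ z ∈ ({x, y} : Set V), z ≠ v := fun {x y} hxy =>
    (eq_or_ne x v).elim (fun h => ⟨y, by simp, h ▸ hxy.symm⟩) fun h => ⟨x, by simp, h⟩
  obtain ⟨l₀, hl₀, hl₀v⟩ := avoid hll'
  obtain ⟨r₀, hr₀, hr₀v⟩ := avoid hrr'
  refine connected_of_forall_adj_of_mem_of_notMem (L := {w | w.1 ∈ L}) (l := ⟨l₀, hl₀v⟩)
    (r := ⟨r₀, hr₀v⟩) ?_ ?_ fun x hx y hy => hadj x hx y hy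
  · rcases hl₀ with rfl | rfl <;> assumption
  · rcases hr₀ with rfl | rfl <;> assumption

variable {G : SimpleGraph V} {H : G.Subgraph}

theorem exists_walk_notMem_support (hH : TwoConnected H.coe) {u y c : V} (hu : u ∈ H.verts)
    (hy : y ∈ H.verts) (huc : u ≠ c) (hyc : y ≠ c) : ∃ p : G.Walk u y, c ∉ p.support := by
  by_cases hc : c ∈ H.verts
  · obtain ⟨p⟩ := (hH.2.2 ⟨c, hc⟩).preconnected
      ⟨⟨u, hu⟩, fun h => huc (congrArg Subtype.val h)⟩
      ⟨⟨y, hy⟩, fun h => hyc (congrArg Subtype.val h)⟩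
    refine ⟨(p.map (Embedding.induce _).toHom).map H.hom, ?_⟩
    show c ∉ ((p.map (Embedding.induce _).toHom).map H.hom).support
    simp only [Walk.support_map, List.map_map, List.mem_map, not_exists, not_and]
    intro z _ hz
    exact z.2 (Subtype.ext hz)
  · obtain ⟨p⟩ := hH.2.1.preconnected ⟨u, hu⟩ ⟨y, hy⟩
    refine ⟨p.map H.hom, ?_⟩
    show c ∉ (p.map H.hom).support
    simp only [Walk.support_map, List.mem_map, not_exists, not_and]
    intro z _ hz
    exact hc (hz ▸ z.2)

theorem verts_subset_insert (hH : TwoConnected H.coe) {S : Set V} {c : V}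
    (hS : ∀ u ∈ S, ∀ w, G.Adj u w → w = c ∨ w ∈ S) (hcS : c ∉ S) {u : V} (hu : u ∈ H.verts)
    (huS : u ∈ S) : H.verts ⊆ insert c S := by
  intro y hy
  rcases eq_or_ne y c with rfl | hyc
  · exact Set.mem_insert _ _
  obtain ⟨p, hp⟩ := hH.exists_walk_notMem_support hu hy (ne_of_mem_of_not_mem huS hcS) hyc
  exact Set.mem_insert_of_mem _ (p.end_mem_of_notMem_support hS huS hp)

end TwoConnected

theorem halfGrid_adj_up (x : ℤ) (n : ℕ) : HalfGrid.Adj (x, n) (x, n + 1) := by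
  simp [HalfGrid, GridRel]

theorem halfGrid_adj_right (x : ℤ) (n : ℕ) : HalfGrid.Adj (x, n) (x + 1, n) := by
  simp [HalfGrid, GridRel]

section HalfGridInduce

variable {s : Set (ℤ × ℕ)}

theorem reachable_induce_of_column {x : ℤ} (hx : ∀ j, (x, j) ∈ s) (m n : ℕ) :
    (HalfGrid.induce s).Reachable ⟨(x, m), hx m⟩ ⟨(x, n), hx n⟩ := by
  have from_zero : ∀ n : ℕ, (HalfGrid.induce s).Reachable ⟨(x, 0), hx 0⟩ ⟨(x, n), hx n⟩ := by
    intro n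
    induction n with
    | zero => rfl
    | succ n ih => exact ih.trans (induce_adj.2 (halfGrid_adj_up x n)).reachable
  exact (from_zero m).symm.trans (from_zero n)

theorem reachable_induce_of_row {n : ℕ} (hn : ∀ t, (t, n) ∈ s) (x y : ℤ) :
    (HalfGrid.induce s).Reachable ⟨(x, n), hn x⟩ ⟨(y, n), hn y⟩ := by
  have from_zero : ∀ y : ℤ, (HalfGrid.induce s).Reachable ⟨(0, n), hn 0⟩ ⟨(y, n), hn y⟩ := by
    intro y
    induction y using Int.induction_on with
    | zero => rfl
    | succ y ih => exact ih.trans (induce_adj.2 (halfGrid_adj_right y n)).reachable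
    | pred y ih =>
      have h := halfGrid_adj_right (-(y : ℤ) - 1) n
      rw [sub_add_cancel] at h
      exact ih.trans (induce_adj.2 h).reachable.symm
  exact (from_zero x).symm.trans (from_zero y)

theorem connected_induce_of_row_of_column (N : ℕ) (hrow : ∀ t, (t, N) ∈ s)
    (hcol : ∀ p (hp : p ∈ s), ∃ x, ∃ hx : ∀ j, (x, j) ∈ s,
      (HalfGrid.induce s).Reachable ⟨p, hp⟩ ⟨(x, p.2), hx p.2⟩) :
    (HalfGrid.induce s).Connected := by
  refine (connected_iff_exists_forall_reachable _).mpr ⟨⟨(0, N), hrow 0⟩, fun ⟨p, hp⟩ => ?_⟩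
  obtain ⟨x, hx, hpx⟩ := hcol p hp
  exact (reachable_induce_of_row hrow 0 x).trans
    ((reachable_induce_of_column hx N p.2).trans hpx.symm)

end HalfGridInduce

theorem twoConnected_halfGrid : TwoConnected HalfGrid := by
  refine ⟨⟨(0, 0), (0, 1), (1, 0), by simp, by simp, by simp⟩, ?_, fun v => ?_⟩
  · exact (induceUnivIso HalfGrid).connected_iff.mp <| connected_induce_of_row_of_column 0
      (fun _ => trivial) fun p _ => ⟨p.1, fun _ => trivial, Reachable.refl _⟩
  · -- the row `v.2 + 1` and every column other than `v.1` avoid `v`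
    refine connected_induce_of_row_of_column (v.2 + 1)
      (fun _ h => Nat.succ_ne_self v.2 (congrArg Prod.snd h)) fun p hp => ?_
    by_cases hpv : p.1 = v.1
    · exact ⟨p.1 + 1, fun _ h => by have := (Prod.ext_iff.mp h).1; dsimp only at this; omega,
        (induce_adj.2 (halfGrid_adj_right p.1 p.2)).reachable⟩
    · exact ⟨p.1, fun _ h => hpv (Prod.ext_iff.mp h).1, Reachable.refl _⟩

def halfGridEmbedding : HalfGrid ↪g GraphG where
  toFun := Sum.inl
  inj' := Sum.inl_injective
  map_rel_iff' := by simp [GraphG, HalfGrid, GRel]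

theorem twoConnected_gridSub : TwoConnected gridSub.coe :=
  twoConnected_halfGrid.of_iso <|
    (Subgraph.induceTopCoeIso _).symm.comp halfGridEmbedding.isoInduceRange

theorem graphG_adj_iff {x y : GV} : GraphG.Adj x y ↔ x ≠ y ∧ (GRel x y ∨ GRel y x) :=
  fromRel_adj _ _ _

def k5Inner (a : NegInt) : Set GV := Set.range fun i => Sum.inr (Sum.inl (a, i))

def k33Inner (b : NonnegInt) : Set GV := Set.range fun i => Sum.inr (Sum.inr (b, i))

theorem K5copy_eq_insert (a : NegInt) : K5copy a = insert (Sum.inl (a.1, 0)) (k5Inner a) := by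
  ext x; simp [K5copy, k5Inner, eq_comm]

theorem K33copy_eq_insert (b : NonnegInt) :
    K33copy b = insert (Sum.inl (b.1, 0)) (k33Inner b) := by
  ext x; simp [K33copy, k33Inner, eq_comm]

theorem eq_or_mem_k5Inner_of_adj {a : NegInt} {u z : GV} (hu : u ∈ k5Inner a)
    (h : GraphG.Adj u z) : z = Sum.inl (a.1, 0) ∨ z ∈ k5Inner a := by
  obtain ⟨i, rfl⟩ := hu
  rcases z with p | (⟨a', j⟩ | ⟨b', j⟩) <;> simp_all [graphG_adj_iff, GRel, k5Inner]
  exact h.2.elim id Eq.symm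

theorem eq_or_mem_k33Inner_of_adj {b : NonnegInt} {u z : GV} (hu : u ∈ k33Inner b)
    (h : GraphG.Adj u z) : z = Sum.inl (b.1, 0) ∨ z ∈ k33Inner b := by
  obtain ⟨i, rfl⟩ := hu
  rcases z with p | (⟨a', j⟩ | ⟨b', j⟩) <;> simp_all [graphG_adj_iff, GRel, k33Inner]
  exact h.2.elim And.left fun h => h.1.symm

theorem le_gridSub_or_le_k5Sub_or_le_k33Sub {H : GraphG.Subgraph} (hH : TwoConnected H.coe) :
    H ≤ gridSub ∨ (∃ a, H ≤ k5Sub a) ∨ (∃ b, H ≤ k33Sub b) := by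
  have le_induce {S : Set GV} (h : H.verts ⊆ S) : H ≤ (⊤ : GraphG.Subgraph).induce S :=
    Subgraph.le_induce_top_verts.trans (Subgraph.induce_mono_right h)
  by_cases hgrid : H.verts ⊆ Set.range Sum.inl
  · exact Or.inl (le_induce hgrid)
  obtain ⟨u, hu, hu_grid⟩ := Set.not_subset.mp hgrid
  rcases u with p | (⟨a, i⟩ | ⟨b, i⟩)
  · exact absurd ⟨p, rfl⟩ hu_grid
  · refine Or.inr (Or.inl ⟨a, le_induce ?_⟩)
    rw [K5copy_eq_insert]
    exact hH.verts_subset_insert (fun u hu _ => eq_or_mem_k5Inner_of_adj hu) (by simp [k5Inner])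
      hu ⟨i, rfl⟩
  · refine Or.inr (Or.inr ⟨b, le_induce ?_⟩)
    rw [K33copy_eq_insert]
    exact hH.verts_subset_insert (fun u hu _ => eq_or_mem_k33Inner_of_adj hu)
      (by simp [k33Inner]) hu ⟨i, rfl⟩

theorem graphG_adj_of_mem_K5copy {a : NegInt} {x y : GV} (hx : x ∈ K5copy a)
    (hy : y ∈ K5copy a) (hxy : x ≠ y) : GraphG.Adj x y := by
  rw [K5copy_eq_insert] at hx hy
  obtain rfl | ⟨i, rfl⟩ := hx <;> obtain rfl | ⟨j, rfl⟩ := hy <;> simp_all [graphG_adj_iff, GRel]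

theorem twoConnected_k5Sub (a : NegInt) : TwoConnected (k5Sub a).coe := by
  have mem (i : Fin 4) : (Sum.inr (Sum.inl (a, i)) : GV) ∈ (k5Sub a).verts :=
    Or.inr ⟨i, rfl⟩
  refine .of_pairwise_adj ⟨⟨_, mem 0⟩, ⟨_, mem 1⟩, ⟨_, mem 2⟩, by simp, by simp, by simp⟩
    fun x y hxy => ⟨x.2, y.2, graphG_adj_of_mem_K5copy x.2 y.2 (Subtype.coe_ne_coe.mpr hxy)⟩

theorem graphG_adj_of_mem_K33copy {b : NonnegInt} {x y : GV} (hx : x ∈ K33copy b)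
    (hx_left : ∀ i : Fin 5, x = Sum.inr (Sum.inr (b, i)) → (i : ℕ) < 2)
    (hy_right : ∃ i : Fin 5, y = Sum.inr (Sum.inr (b, i)) ∧ 2 ≤ (i : ℕ)) : GraphG.Adj x y := by
  obtain ⟨i, rfl, hi⟩ := hy_right
  rw [K33copy_eq_insert] at hx
  obtain rfl | ⟨j, rfl⟩ := hx
  · simp_all [graphG_adj_iff, GRel]
  · have := hx_left j rfl
    simp_all [graphG_adj_iff, GRel]
    omega

theorem twoConnected_k33Sub (b : NonnegInt) : TwoConnected (k33Sub b).coe := by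
  have mem (i : Fin 5) : (Sum.inr (Sum.inr (b, i)) : GV) ∈ (k33Sub b).verts :=
    Or.inr ⟨i, rfl⟩
  refine .of_forall_adj_of_mem_of_notMem
    {w | ∀ i : Fin 5, w.1 = Sum.inr (Sum.inr (b, i)) → (i : ℕ) < 2}
    ⟨⟨_, mem 0⟩, by simp, ⟨_, mem 1⟩, by simp, by simp⟩
    ⟨⟨_, mem 2⟩, by simp, ⟨_, mem 3⟩, by simp, by simp⟩ fun x hx y hy => ?_
  simp only [Set.mem_ofPred_eq, not_forall, not_lt, exists_prop] at hy
  exact ⟨x.2, y.2, graphG_adj_of_mem_K33copy x.2 hx hy⟩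

def graphGBlocks : Set GraphG.Subgraph := insert gridSub (Set.range k5Sub ∪ Set.range k33Sub)

theorem twoConnected_of_mem_graphGBlocks {P : GraphG.Subgraph} (hP : P ∈ graphGBlocks) :
    TwoConnected P.coe := by
  rcases hP with rfl | ⟨a, rfl⟩ | ⟨b, rfl⟩
  exacts [twoConnected_gridSub, twoConnected_k5Sub a, twoConnected_k33Sub b]

theorem exists_mem_graphGBlocks_le {H : GraphG.Subgraph} (hH : TwoConnected H.coe) :
    ∃ P ∈ graphGBlocks, H ≤ P := by
  rcases le_gridSub_or_le_k5Sub_or_le_k33Sub hH with h | ⟨a, h⟩ | ⟨b, h⟩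
  exacts [⟨_, Or.inl rfl, h⟩, ⟨_, Or.inr (Or.inl ⟨a, rfl⟩), h⟩, ⟨_, Or.inr (Or.inr ⟨b, rfl⟩), h⟩]

theorem exists_mem_verts_forall_mem_graphGBlocks {P : GraphG.Subgraph} (hP : P ∈ graphGBlocks) :
    ∃ v ∈ P.verts, ∀ Q ∈ graphGBlocks, v ∈ Q.verts → Q = P := by
  rcases hP with rfl | ⟨a, rfl⟩ | ⟨b, rfl⟩
  on_goal 1 => refine ⟨Sum.inl (0, 1), ⟨_, rfl⟩, ?_⟩
  on_goal 2 => refine ⟨Sum.inr (Sum.inl (a, 0)), Or.inr ⟨0, rfl⟩, ?_⟩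
  on_goal 3 => refine ⟨Sum.inr (Sum.inr (b, 0)), Or.inr ⟨0, rfl⟩, ?_⟩
  all_goals
    rintro _ (rfl | ⟨a', rfl⟩ | ⟨b', rfl⟩) h <;>
      simp_all [gridSub, k5Sub, k33Sub, K5copy, K33copy]

theorem isAntichain_graphGBlocks : IsAntichain (· ≤ ·) graphGBlocks := by
  intro P hP Q hQ hne hle
  obtain ⟨v, hv, hQP⟩ := exists_mem_verts_forall_mem_graphGBlocks hP
  exact hne (hQP Q hQ (hle.1 hv)).symm

/-- Every 2-connected subgraph of `G` is contained in the half-grid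
subgraph, in an attached `K₅`, or in an attached `K₃,₃`; consequently the maximal
2-connected subgraphs of `G` are exactly the half-grid together with the attached
`K₅`-subgraphs and the attached `K₃,₃`-subgraphs. -/
theorem statement11 :
    (∀ H : GraphG.Subgraph, TwoConnected H.coe →
        H ≤ gridSub ∨ (∃ a, H ≤ k5Sub a) ∨ (∃ b, H ≤ k33Sub b)) ∧
    {H : GraphG.Subgraph | TwoConnected H.coe ∧
        ∀ H' : GraphG.Subgraph, TwoConnected H'.coe → H ≤ H' → H' = H}
      = insert gridSub (Set.range k5Sub ∪ Set.range k33Sub) :=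
  ⟨fun _ => le_gridSub_or_le_k5Sub_or_le_k33Sub,
    setOf_maximal_eq (fun _ => twoConnected_of_mem_graphGBlocks)
      (fun _ => exists_mem_graphGBlocks_le) isAntichain_graphGBlocks⟩
end
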